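/- arXiv:2304.03989 — 2 statements merged into one kernel-verified Lean document; each statement's English description precedes it below -/
import Mathlib

section
/- Let A be a holomorphic Fredholm pencil with z₀ isolated in σ(A), A₀ = A(z₀), A₁ = A'(z₀). If A(z)⁻¹ has a simple pole at z₀, then for any closed complement V₀ of ran A₀ the operator S_{V₀} = P_{V₀} A₁|_{ker A₀} : ker A₀ → V₀ is invertible. -/
/-!
Write `N(z) = N₋₁ (z - z₀)⁻¹ + N₀ + O(z - z₀)` for the inverse of
`A(z) = A₀ + A₁ (z - z₀) + o(z - z₀)`. Comparing the coefficients of `(z - z₀)⁻¹` and `1` in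
`N(z) A(z) = 1 = A(z) N(z)` gives `N₋₁ A₀ = 0 = A₀ N₋₁` and `N₋₁ A₁ + N₀ A₀ = 1 = A₁ N₋₁ + A₀ N₀`.
If `x ∈ ker A₀` and `A₁ x = A₀ w`, then `x = N₋₁ A₁ x + N₀ A₀ x = N₋₁ A₀ w = 0`; conversely
`x = N₋₁ v` lies in `ker A₀` and `A₁ x = v - A₀ N₀ v`, so `P A₁ x = v` for `v ∈ V₀`.
-/

open scoped Topology

/-- A bounded operator is Fredholm if its kernel and cokernel are finite dimensional. -/
def IsFredholmOp {E : Type*} [NormedAddCommGroup E] [NormedSpace ℂ E]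
    (A : E →L[ℂ] E) : Prop :=
  FiniteDimensional ℂ (LinearMap.ker (A : E →ₗ[ℂ] E)) ∧ FiniteDimensional ℂ (E ⧸ LinearMap.range (A : E →ₗ[ℂ] E))

open Filter

theorem tendsto_nhdsNE_of_eventually_hasSum_pow_smul {𝕜 F : Type*} [NontriviallyNormedField 𝕜]
    [NormedAddCommGroup F] [NormedSpace 𝕜 F] [CompleteSpace F] {c : ℕ → F} {g : 𝕜 → F} {z₀ : 𝕜}
    (h : ∀ᶠ z in 𝓝[≠] z₀, HasSum (fun n => (z - z₀) ^ n • c n) (g z)) :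
    Tendsto g (𝓝[≠] z₀) (𝓝 (c 0)) := by
  let p : FormalMultilinearSeries 𝕜 𝕜 F := fun n =>
    ContinuousMultilinearMap.mkPiRing 𝕜 (Fin n) (c n)
  have hp : ∀ n (w : 𝕜), p n (fun _ => w) = w ^ n • c n := by
    simp [p, ContinuousMultilinearMap.mkPiRing_apply]
  obtain ⟨z₁, hz₁, hz₁ne⟩ := (h.and eventually_mem_nhdsWithin).exists
  have hradius : (‖z₁ - z₀‖₊ : ENNReal) ≤ p.radius :=
    p.le_radius_of_tendsto (l := 0) <| by
      simpa [p, norm_smul, mul_comm] using hz₁.summable.tendsto_atTop_zero.norm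
  have hpos : 0 < p.radius := lt_of_lt_of_le (by simpa [sub_eq_zero] using hz₁ne) hradius
  have hsum := p.hasFPowerSeriesOnBall hpos
  have hcont : ContinuousAt (fun z => p.sum (z - z₀)) z₀ :=
    ContinuousAt.comp (g := p.sum) (by simpa using hsum.hasFPowerSeriesAt.continuousAt)
      (continuousAt_id.sub continuousAt_const)
  have hsum_zero : p.sum 0 = c 0 := by
    rw [← hsum.coeff_zero (fun _ => 0), hp, pow_zero, one_smul]
  replace hcont : Tendsto (fun z => p.sum (z - z₀)) (𝓝 z₀) (𝓝 (c 0)) := by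
    simpa [hsum_zero] using hcont.tendsto
  refine (hcont.mono_left nhdsWithin_le_nhds).congr' ?_
  filter_upwards [h, nhdsWithin_le_nhds (Metric.eball_mem_nhds z₀ hpos)] with z hz hball
  have := hsum.hasSum (y := z - z₀) (by simpa [edist_dist, dist_eq_norm] using hball)
  simp only [hp, zero_add] at this
  exact this.unique hz

theorem HasSum.pow_smul_nat_of_zpow_smul {𝕜 F : Type*} [Field 𝕜] [AddCommGroup F] [Module 𝕜 F]
    [TopologicalSpace F] [IsTopologicalAddGroup F] {N : ℤ → F} {w : 𝕜} {S : F}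
    (h : HasSum (fun j : ℤ => w ^ j • N j) S) (hlow : ∀ j < -1, N j = 0) :
    HasSum (fun n : ℕ => w ^ n • N n) (S - w⁻¹ • N (-1)) := by
  have := h.nat_add_neg_add_one.sub (hasSum_ite_eq 0 (w⁻¹ • N (-1)))
  refine this.congr_fun fun n => ?_
  rcases n with _ | n
  · simp
  · rw [hlow (-(((n + 1 : ℕ) : ℤ) + 1)) (by omega)]
    simp only [Nat.cast_add, Nat.cast_one, smul_zero, add_zero, Nat.add_one_ne_zero, if_false,
      sub_zero]
    norm_cast

theorem tendsto_sub_smul_of_tendsto_sub_inv_smul {𝕜 F : Type*} [NontriviallyNormedField 𝕜]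
    [NormedAddCommGroup F] [NormedSpace 𝕜 F] {f : 𝕜 → F} {z₀ : 𝕜} {r c₀ : F}
    (h : Tendsto (fun z => f z - (z - z₀)⁻¹ • r) (𝓝[≠] z₀) (𝓝 c₀)) :
    Tendsto (fun z => (z - z₀) • f z) (𝓝[≠] z₀) (𝓝 r) := by
  have hlim : Tendsto (fun z => r + (z - z₀) • (f z - (z - z₀)⁻¹ • r)) (𝓝[≠] z₀)
      (𝓝 (r + (z₀ - z₀) • c₀)) :=
    tendsto_const_nhds.add (((tendsto_id.sub_const z₀).mono_left nhdsWithin_le_nhds).smul h)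
  rw [sub_self, zero_smul, add_zero] at hlim
  refine hlim.congr' ?_
  filter_upwards [self_mem_nhdsWithin] with z hz
  rw [smul_sub, smul_smul, mul_inv_cancel₀ (sub_ne_zero.mpr hz), one_smul, add_sub_cancel]

section SimplePole

variable {𝕜 R : Type*} [NontriviallyNormedField 𝕜] [NormedRing R] [NormedAlgebra 𝕜 R]
  {a n : 𝕜 → R} {a₁ r n₀ : R} {z₀ : 𝕜}

theorem HasDerivAt.simplePole_identities_of_mul_eq_one (ha : HasDerivAt a a₁ z₀)
    (hn : Tendsto (fun z => n z - (z - z₀)⁻¹ • r) (𝓝[≠] z₀) (𝓝 n₀))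
    (hinv : ∀ᶠ z in 𝓝[≠] z₀, n z * a z = 1) :
    r * a z₀ = 0 ∧ r * a₁ + n₀ * a z₀ = 1 := by
  have ha₀ : Tendsto a (𝓝[≠] z₀) (𝓝 (a z₀)) := ha.continuousAt.continuousWithinAt
  have hres : r * a z₀ = 0 := by
    have hvanish : Tendsto (fun z => (z - z₀) • (1 : R)) (𝓝[≠] z₀) (𝓝 0) := by
      simpa using ((tendsto_id.sub_const z₀).smul_const (1 : R)).mono_left
        (nhdsWithin_le_nhds (a := z₀))
    refine tendsto_nhds_unique ((tendsto_sub_smul_of_tendsto_sub_inv_smul hn).mul ha₀)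
      (hvanish.congr' ?_)
    filter_upwards [hinv] with z hz
    rw [smul_mul_assoc, hz]
  refine ⟨hres, tendsto_nhds_unique
    ((tendsto_const_nhds.mul ha.tendsto_slope).add (hn.mul ha₀)) (tendsto_const_nhds.congr' ?_)⟩
  filter_upwards [hinv] with z hz
  rw [slope_def_module, mul_smul_comm, mul_sub, hres, sub_zero, sub_mul, smul_mul_assoc, hz]
  abel

theorem HasDerivAt.simplePole_identities_of_mul_eq_one' (ha : HasDerivAt a a₁ z₀)
    (hn : Tendsto (fun z => n z - (z - z₀)⁻¹ • r) (𝓝[≠] z₀) (𝓝 n₀))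
    (hinv : ∀ᶠ z in 𝓝[≠] z₀, a z * n z = 1) :
    a z₀ * r = 0 ∧ a₁ * r + a z₀ * n₀ = 1 := by
  -- the right-inverse case is the left-inverse case in `Rᵐᵒᵖ`
  let op := MulOpposite.opContinuousLinearEquiv (M := R) 𝕜
  have hop := HasDerivAt.simplePole_identities_of_mul_eq_one (a := fun z => op (a z))
    (n := fun z => op (n z)) (r := op r) (n₀ := op n₀)
    (op.hasFDerivAt.comp_hasDerivAt z₀ ha)
    (by simpa [op, Function.comp_def] using (op.continuous.tendsto n₀).comp hn)
    (hinv.mono fun z hz => by simp [op, ← MulOpposite.op_mul, hz])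
  simp only [op, ContinuousLinearEquiv.coe_coe, MulOpposite.opContinuousLinearEquiv_apply,
    ← MulOpposite.op_mul, ← MulOpposite.op_add, MulOpposite.op_eq_zero_iff,
    MulOpposite.op_eq_one_iff] at hop
  exact hop

end SimplePole

namespace ContinuousLinearMap

variable {R E : Type*} [Ring R] [AddCommGroup E] [TopologicalSpace E] [IsTopologicalAddGroup E]
  [Module R E] {A₀ A₁ r n₀ P : E →L[R] E}

theorem eq_zero_of_mem_ker_of_apply_mem_range (hres : r * A₀ = 0) (hid : r * A₁ + n₀ * A₀ = 1)
    {x : E} (hx : A₀ x = 0) (hx₁ : A₁ x ∈ LinearMap.range (A₀ : E →ₗ[R] E)) : x = 0 := by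
  obtain ⟨w, hw⟩ := hx₁
  calc x = (r * A₁ + n₀ * A₀) x := by rw [hid]; rfl
    _ = (r * A₀) w := by simp [hx, ← hw]
    _ = 0 := by rw [hres]; rfl

theorem injective_apply_restrict_ker (hres : r * A₀ = 0) (hid : r * A₁ + n₀ * A₀ = 1)
    (hP : LinearMap.ker (P : E →ₗ[R] E) ≤ LinearMap.range (A₀ : E →ₗ[R] E)) :
    Function.Injective (fun x : LinearMap.ker (A₀ : E →ₗ[R] E) => P (A₁ x)) := by
  intro x y hxy
  rw [← sub_eq_zero, ← Submodule.coe_eq_zero, Submodule.coe_sub]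
  refine eq_zero_of_mem_ker_of_apply_mem_range hres hid ?_ (hP ?_)
  · simp
  · simpa [LinearMap.mem_ker, sub_eq_zero] using hxy

theorem exists_mem_ker_apply_eq (hres : A₀ * r = 0) (hid : A₁ * r + A₀ * n₀ = 1)
    (hP : LinearMap.range (A₀ : E →ₗ[R] E) ≤ LinearMap.ker (P : E →ₗ[R] E)) {v : E}
    (hv : P v = v) : ∃ x ∈ LinearMap.ker (A₀ : E →ₗ[R] E), P (A₁ x) = v := by
  refine ⟨r v, congr($hres v), ?_⟩
  have hA₁ : A₁ (r v) = v - A₀ (n₀ v) := eq_sub_of_add_eq congr($hid v)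
  rw [hA₁, map_sub, show P (A₀ (n₀ v)) = 0 from hP ⟨n₀ v, rfl⟩, hv, sub_zero]

end ContinuousLinearMap

theorem stmt_9_general {E : Type*} [NormedAddCommGroup E] [NormedSpace ℂ E] [CompleteSpace E]
    (U : Set ℂ) (A : ℂ → E →L[ℂ] E) (hol : AnalyticOnNhd ℂ A U)
    (z₀ : ℂ) (hz₀ : z₀ ∈ U)
    -- Laurent expansion of the inverse `N(z)` with a simple pole at `z₀`
    (N : ℤ → E →L[ℂ] E) (hlow : ∀ j : ℤ, j < -1 → N j = 0)
    (Ninv : ℂ → E →L[ℂ] E)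
    (hNinv : ∀ᶠ z in 𝓝[≠] z₀, Ninv z ∘L A z = 1 ∧ A z ∘L Ninv z = 1)
    (hLaurent : ∀ᶠ z in 𝓝[≠] z₀, HasSum (fun j : ℤ => (z - z₀) ^ j • N j) (Ninv z))
    -- a closed complement `V₀` of `ran A₀` and the projection `P` onto `V₀` along `ran A₀`
    (V₀ : Submodule ℂ E)
    (P : E →L[ℂ] E) (hPidem : P ∘L P = P)
    (hPker : LinearMap.ker (P : E →ₗ[ℂ] E) = LinearMap.range (A z₀ : E →ₗ[ℂ] E)) (hPran : LinearMap.range (P : E →ₗ[ℂ] E) = V₀) :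
    Function.Injective (fun x : LinearMap.ker (A z₀ : E →ₗ[ℂ] E) => P (deriv A z₀ x)) ∧
      ∀ v ∈ V₀, ∃ x ∈ LinearMap.ker (A z₀ : E →ₗ[ℂ] E), P (deriv A z₀ x) = v := by
  have hA : HasDerivAt A (deriv A z₀) z₀ := (hol z₀ hz₀).differentiableAt.hasDerivAt
  have hreg : Tendsto (fun z => Ninv z - (z - z₀)⁻¹ • N (-1)) (𝓝[≠] z₀) (𝓝 (N 0)) :=
    tendsto_nhdsNE_of_eventually_hasSum_pow_smul (c := fun n : ℕ => N n)
      (hLaurent.mono fun z hz => hz.pow_smul_nat_of_zpow_smul hlow)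
  obtain ⟨hNA, hleft⟩ := hA.simplePole_identities_of_mul_eq_one hreg (hNinv.mono fun z hz => hz.1)
  obtain ⟨hAN, hright⟩ := hA.simplePole_identities_of_mul_eq_one' hreg (hNinv.mono fun z hz => hz.2)
  refine ⟨ContinuousLinearMap.injective_apply_restrict_ker hNA hleft hPker.le, fun v hv =>
    ContinuousLinearMap.exists_mem_ker_apply_eq hAN hright hPker.ge ?_⟩
  obtain ⟨u, rfl⟩ := hPran ▸ hv
  exact congr($hPidem u)

/-- if the inverse of the holomorphic Fredholm pencil `A` has a simple pole at
the isolated spectral point `z₀`, then for any closed complement `V₀` of `ran A₀` (with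
projection `P` onto `V₀` along `ran A₀`) the map `S_{V₀} = P A₁|_{ker A₀} : ker A₀ → V₀`
is invertible (injective and onto `V₀`). -/
theorem stmt_9 {E : Type*} [NormedAddCommGroup E] [NormedSpace ℂ E] [CompleteSpace E]
    (U : Set ℂ) (hUopen : IsOpen U) (hUconn : IsConnected U)
    (A : ℂ → E →L[ℂ] E) (hol : AnalyticOnNhd ℂ A U)
    (hFred : ∀ z ∈ U, IsFredholmOp (A z))
    (z₀ : ℂ) (hz₀ : z₀ ∈ U)
    (hsing : ¬ IsUnit (A z₀)) (hiso : ∀ᶠ z in 𝓝[≠] z₀, IsUnit (A z))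
    -- Laurent expansion of the inverse `N(z)` with a simple pole at `z₀`
    (N : ℤ → E →L[ℂ] E) (hNm : N (-1) ≠ 0) (hlow : ∀ j : ℤ, j < -1 → N j = 0)
    (Ninv : ℂ → E →L[ℂ] E)
    (hNinv : ∀ᶠ z in 𝓝[≠] z₀, Ninv z ∘L A z = 1 ∧ A z ∘L Ninv z = 1)
    (hLaurent : ∀ᶠ z in 𝓝[≠] z₀, HasSum (fun j : ℤ => (z - z₀) ^ j • N j) (Ninv z))
    -- a closed complement `V₀` of `ran A₀` and the projection `P` onto `V₀` along `ran A₀`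
    (V₀ : Submodule ℂ E) (hV₀closed : IsClosed (V₀ : Set E))
    (hV₀ : IsCompl (LinearMap.range (A z₀ : E →ₗ[ℂ] E)) V₀)
    (P : E →L[ℂ] E) (hPidem : P ∘L P = P)
    (hPker : LinearMap.ker (P : E →ₗ[ℂ] E) = LinearMap.range (A z₀ : E →ₗ[ℂ] E)) (hPran : LinearMap.range (P : E →ₗ[ℂ] E) = V₀) :
    Function.Injective (fun x : LinearMap.ker (A z₀ : E →ₗ[ℂ] E) => P (deriv A z₀ x)) ∧
      ∀ v ∈ V₀, ∃ x ∈ LinearMap.ker (A z₀ : E →ₗ[ℂ] E), P (deriv A z₀ x) = v :=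
  stmt_9_general U A hol z₀ hz₀ N hlow Ninv hNinv hLaurent V₀ P hPidem hPker hPran
end

section
/- Under a simple pole at z₀ of the inverse of a holomorphic Fredholm pencil, and for any choice V₀ of a complement of ran A₀, the residue is given by N₋₁ = S_{V₀}⁻¹ P_{V₀}, where P_{V₀} is the projection onto V₀ along ran A₀ and S_{V₀} = P_{V₀} A₁|_{ker A₀}. -/
/-! Multiplying the Laurent series by `z - z₀` leaves a power series in `z - z₀`, so
`(z - z₀) N(z) → N₋₁`. Passing to the limit in `A(z) (z - z₀) N(z) = z - z₀` gives `A₀ N₋₁ = 0`.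
Since `P A₀ = 0`, `P = P (A(z) - A₀) N(z) = P ((A(z) - A₀) / (z - z₀)) ((z - z₀) N(z))`, and the
right-hand side tends to `P A₁ N₋₁`. -/

open scoped Topology

open Filter

section PowerSeries

variable {F : Type*} [NormedAddCommGroup F] [NormedSpace ℂ F]

theorem norm_sub_coeff_zero_le_of_hasSum {a : ℕ → F} {r C : ℝ} (hr : 0 < r)
    (hC : ∀ n, ‖a n‖ * r ^ n ≤ C) {w : ℂ} (hw : ‖w‖ ≤ r / 2) {S : F}
    (hS : HasSum (fun n => w ^ n • a n) S) :
    ‖S - a 0‖ ≤ 2 * C / r * ‖w‖ := by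
  have hC₀ : 0 ≤ C := (mul_nonneg (norm_nonneg _) (pow_nonneg hr.le 0)).trans (hC 0)
  have hq : ‖w‖ / r ≤ 1 / 2 := by rw [div_le_iff₀ hr]; linarith
  have htail : HasSum (fun n => w ^ (n + 1) • a (n + 1)) (S - a 0) := by
    simpa using (hasSum_nat_add_iff' 1).2 hS
  have hgeom : HasSum (fun n : ℕ => C * (‖w‖ / r) * (1 / 2) ^ n) (2 * C / r * ‖w‖) := by
    have h := hasSum_geometric_two.mul_left (C * (‖w‖ / r))
    rwa [show C * (‖w‖ / r) * 2 = 2 * C / r * ‖w‖ by ring] at h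
  refine htail.norm_le_of_bounded hgeom fun n => ?_
  calc ‖w ^ (n + 1) • a (n + 1)‖ = ‖a (n + 1)‖ * r ^ (n + 1) * ((‖w‖ / r) * (‖w‖ / r) ^ n) := by
        rw [norm_smul, norm_pow, ← pow_succ', div_pow]
        field_simp
    _ ≤ C * ((‖w‖ / r) * (1 / 2) ^ n) := by
        gcongr
        exact hC _
    _ = C * (‖w‖ / r) * (1 / 2) ^ n := by ring

theorem tendsto_coeff_zero_of_hasSum {a : ℕ → F} {w₁ : ℂ} (hw₁ : w₁ ≠ 0)
    (h₁ : Summable fun n => w₁ ^ n • a n) {α : Type*} {l : Filter α} {w : α → ℂ} {S : α → F}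
    (hw : Tendsto w l (𝓝 0)) (hS : ∀ᶠ x in l, HasSum (fun n => w x ^ n • a n) (S x)) :
    Tendsto S l (𝓝 (a 0)) := by
  set r := ‖w₁‖
  have hr : 0 < r := norm_pos_iff.2 hw₁
  obtain ⟨C, hC⟩ : ∃ C, ∀ n, ‖a n‖ * r ^ n ≤ C := by
    obtain ⟨C, hC⟩ := (tendsto_norm_zero.comp h₁.tendsto_atTop_zero).bddAbove_range
    refine ⟨C, fun n => ?_⟩
    simpa [norm_smul, mul_comm] using hC (Set.mem_range_self n)
  have hsmall : ∀ᶠ x in l, ‖w x‖ ≤ r / 2 :=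
    (tendsto_norm_zero.comp hw).eventually (ge_mem_nhds (half_pos hr))
  rw [tendsto_iff_norm_sub_tendsto_zero]
  refine squeeze_zero' (Eventually.of_forall fun _ => norm_nonneg _) ?_
    (by simpa using (tendsto_norm_zero.comp hw).const_mul (2 * C / r))
  filter_upwards [hS, hsmall] with x hx hxr
  exact norm_sub_coeff_zero_le_of_hasSum hr hC hxr hx

theorem HasSum.smul_of_simple_pole {N : ℤ → F} (hlow : ∀ j : ℤ, j < -1 → N j = 0) {w : ℂ}
    (hw : w ≠ 0) {S : F} (h : HasSum (fun j : ℤ => w ^ j • N j) S) :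
    HasSum (fun n : ℕ => w ^ n • N (n - 1)) (w • S) := by
  have hg : Function.Injective fun n : ℕ => (n : ℤ) - 1 := fun m n h => by simpa using h
  convert (hg.hasSum_iff fun j hj => ?_).2 (h.const_smul w) using 1
  · funext n
    simp [smul_smul, ← zpow_one_add₀ hw]
  · rw [hlow j ?_, smul_zero, smul_zero]
    by_contra! hj'
    exact hj ⟨(j + 1).toNat, show ((j + 1).toNat : ℤ) - 1 = j by omega⟩

theorem tendsto_sub_smul_of_laurent {N : ℤ → F} (hlow : ∀ j : ℤ, j < -1 → N j = 0) {z₀ : ℂ}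
    {R : ℂ → F} (hR : ∀ᶠ z in 𝓝[≠] z₀, HasSum (fun j : ℤ => (z - z₀) ^ j • N j) (R z)) :
    Tendsto (fun z => (z - z₀) • R z) (𝓝[≠] z₀) (𝓝 (N (-1))) := by
  have hpow : ∀ᶠ z in 𝓝[≠] z₀,
      HasSum (fun n : ℕ => (z - z₀) ^ n • N (n - 1)) ((z - z₀) • R z) := by
    filter_upwards [hR, self_mem_nhdsWithin] with z hz hne
    exact hz.smul_of_simple_pole hlow (sub_ne_zero.2 hne)
  obtain ⟨z₁, hz₁, hz₁ne⟩ := (hpow.and self_mem_nhdsWithin).exists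
  have hw : Tendsto (fun z => z - z₀) (𝓝[≠] z₀) (𝓝 0) :=
    tendsto_sub_nhds_zero_iff.2 (tendsto_nhdsWithin_of_tendsto_nhds tendsto_id)
  simpa using tendsto_coeff_zero_of_hasSum (sub_ne_zero.2 hz₁ne) hz₁.summable hw hpow

end PowerSeries

section Residue

variable {𝔸 : Type*} [NormedRing 𝔸] [NormedAlgebra ℂ 𝔸] {A R : ℂ → 𝔸} {z₀ : ℂ} {R₀ : 𝔸}

theorem mul_residue_eq_zero (hA : ContinuousAt A z₀) (hAR : ∀ᶠ z in 𝓝[≠] z₀, A z * R z = 1)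
    (hR : Tendsto (fun z => (z - z₀) • R z) (𝓝[≠] z₀) (𝓝 R₀)) : A z₀ * R₀ = 0 := by
  have hlim : Tendsto (fun z => A z * ((z - z₀) • R z)) (𝓝[≠] z₀) (𝓝 (A z₀ * R₀)) :=
    (hA.tendsto.mono_left nhdsWithin_le_nhds).mul hR
  have hsmul : Tendsto (fun z => (z - z₀) • (1 : 𝔸)) (𝓝[≠] z₀) (𝓝 0) := by
    have hw : Tendsto (fun z => z - z₀) (𝓝[≠] z₀) (𝓝 0) :=
      tendsto_sub_nhds_zero_iff.2 (tendsto_nhdsWithin_of_tendsto_nhds tendsto_id)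
    simpa using hw.smul_const (1 : 𝔸)
  refine tendsto_nhds_unique (hlim.congr' ?_) hsmul
  filter_upwards [hAR] with z hz
  rw [mul_smul_comm, hz]

theorem mul_deriv_mul_residue_eq {P A₁ : 𝔸} (hA : HasDerivAt A A₁ z₀)
    (hAR : ∀ᶠ z in 𝓝[≠] z₀, A z * R z = 1)
    (hR : Tendsto (fun z => (z - z₀) • R z) (𝓝[≠] z₀) (𝓝 R₀)) (hPA : P * A z₀ = 0) :
    P * A₁ * R₀ = P := by
  have hslope : Tendsto (fun z => (z - z₀)⁻¹ • (A z - A z₀)) (𝓝[≠] z₀) (𝓝 A₁) := by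
    simpa only [funext (slope_def_module A z₀)] using hasDerivAt_iff_tendsto_slope.1 hA
  have hlim : Tendsto (fun z => P * ((z - z₀)⁻¹ • (A z - A z₀)) * ((z - z₀) • R z)) (𝓝[≠] z₀)
      (𝓝 (P * A₁ * R₀)) :=
    (tendsto_const_nhds.mul hslope).mul hR
  refine tendsto_nhds_unique (hlim.congr' ?_) tendsto_const_nhds
  filter_upwards [hAR, self_mem_nhdsWithin] with z hz hne
  have hw : z - z₀ ≠ 0 := sub_ne_zero.2 hne
  calc P * ((z - z₀)⁻¹ • (A z - A z₀)) * ((z - z₀) • R z) = P * (A z - A z₀) * R z := by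
        simp only [mul_smul_comm, smul_mul_assoc, smul_smul, mul_inv_cancel₀ hw, one_smul]
    _ = P * (A z * R z) - P * A z₀ * R z := by noncomm_ring
    _ = P := by rw [hz, hPA, mul_one, zero_mul, sub_zero]

end Residue

theorem stmt_11_general {E : Type*} [NormedAddCommGroup E] [NormedSpace ℂ E]
    (U : Set ℂ)
    (A : ℂ → E →L[ℂ] E) (hol : AnalyticOnNhd ℂ A U)
    (z₀ : ℂ) (hz₀ : z₀ ∈ U)
    -- Laurent expansion of the inverse `N(z)` with a simple pole at `z₀`
    (N : ℤ → E →L[ℂ] E) (hlow : ∀ j : ℤ, j < -1 → N j = 0)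
    (Ninv : ℂ → E →L[ℂ] E)
    (hNinv : ∀ᶠ z in 𝓝[≠] z₀, Ninv z ∘L A z = 1 ∧ A z ∘L Ninv z = 1)
    (hLaurent : ∀ᶠ z in 𝓝[≠] z₀, HasSum (fun j : ℤ => (z - z₀) ^ j • N j) (Ninv z))
    (P : E →L[ℂ] E)
    (hPker : LinearMap.ker (P : E →ₗ[ℂ] E) = LinearMap.range (A z₀ : E →ₗ[ℂ] E)) :
    ∀ y : E, N (-1) y ∈ LinearMap.ker (A z₀ : E →ₗ[ℂ] E) ∧ P (deriv A z₀ (N (-1) y)) = P y := by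
  have hA : HasDerivAt A (deriv A z₀) z₀ := (hol z₀ hz₀).differentiableAt.hasDerivAt
  have hAN : ∀ᶠ z in 𝓝[≠] z₀, A z * Ninv z = 1 := hNinv.mono fun _ h => h.2
  have hres := tendsto_sub_smul_of_laurent hlow hLaurent
  have hPA : P * A z₀ = 0 := by
    ext x
    exact hPker.ge (LinearMap.mem_range_self _ x)
  intro y
  exact ⟨DFunLike.congr_fun (mul_residue_eq_zero hA.continuousAt hAN hres) y,
    DFunLike.congr_fun (mul_deriv_mul_residue_eq hA hAN hres hPA) y⟩

/-- under a simple pole at `z₀`, for any closed complement `V₀` of `ran A₀`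
with projection `P` onto `V₀` along `ran A₀`, the residue satisfies `N₋₁ = S_{V₀}⁻¹ P`
(viewed as a map `B → B` via `ker A₀ ⊆ B`), i.e. for every `y`, `N₋₁ y ∈ ker A₀` and
`S_{V₀}(N₋₁ y) = P (A₁ (N₋₁ y)) = P y`. -/
theorem stmt_11 {E : Type*} [NormedAddCommGroup E] [NormedSpace ℂ E] [CompleteSpace E]
    (U : Set ℂ) (hUopen : IsOpen U) (hUconn : IsConnected U)
    (A : ℂ → E →L[ℂ] E) (hol : AnalyticOnNhd ℂ A U)
    (hFred : ∀ z ∈ U, IsFredholmOp (A z))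
    (z₀ : ℂ) (hz₀ : z₀ ∈ U)
    (hsing : ¬ IsUnit (A z₀)) (hiso : ∀ᶠ z in 𝓝[≠] z₀, IsUnit (A z))
    -- Laurent expansion of the inverse `N(z)` with a simple pole at `z₀`
    (N : ℤ → E →L[ℂ] E) (hNm : N (-1) ≠ 0) (hlow : ∀ j : ℤ, j < -1 → N j = 0)
    (Ninv : ℂ → E →L[ℂ] E)
    (hNinv : ∀ᶠ z in 𝓝[≠] z₀, Ninv z ∘L A z = 1 ∧ A z ∘L Ninv z = 1)
    (hLaurent : ∀ᶠ z in 𝓝[≠] z₀, HasSum (fun j : ℤ => (z - z₀) ^ j • N j) (Ninv z))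
    -- a closed complement `V₀` of `ran A₀` and the projection `P` onto `V₀` along `ran A₀`
    (V₀ : Submodule ℂ E) (hV₀closed : IsClosed (V₀ : Set E))
    (hV₀ : IsCompl (LinearMap.range (A z₀ : E →ₗ[ℂ] E)) V₀)
    (P : E →L[ℂ] E) (hPidem : P ∘L P = P)
    (hPker : LinearMap.ker (P : E →ₗ[ℂ] E) = LinearMap.range (A z₀ : E →ₗ[ℂ] E)) (hPran : LinearMap.range (P : E →ₗ[ℂ] E) = V₀) :
    ∀ y : E, N (-1) y ∈ LinearMap.ker (A z₀ : E →ₗ[ℂ] E) ∧ P (deriv A z₀ (N (-1) y)) = P y :=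
  stmt_11_general U A hol z₀ hz₀ N hlow Ninv hNinv hLaurent P hPker
end
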